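/- arXiv:1601.03669 — 13 statements merged into one kernel-verified Lean document; each statement's English description precedes it below -/
import Mathlib

section
/- A nonzero tuple (x₀,x₁,x₂,x₃) ∈ k⁴ lies on E_c and satisfies x₀+x₁+x₂+x₃ = 0 if and only if it is a nonzero scalar multiple of one of the four tuples (1,0,0,1), (1,1,0,0), (0,1,1,0), (0,0,1,1). (The hyperplane X₀+X₁+X₂+X₃ = 0 cuts out exactly the cyclic subgroup ⟨T⟩ ≅ Z/4Z of E_c.) -/
/-! On the hyperplane `x₀ + x₁ + x₂ + x₃ = 0` the two quadrics reduce to `x₀x₂ = 0 = x₁x₃`,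
so one of `x₀, x₂` and one of `x₁, x₃` vanish; the two remaining coordinates add up to zero,
which in characteristic 2 means that they are equal. -/

theorem onZ4NormalForm_and_sum_eq_zero_iff {R : Type*} [CommRing R] [NoZeroDivisors R]
    {c : R} (hc : c ≠ 0) (x₀ x₁ x₂ x₃ : R) :
    (((x₀ + x₁ + x₂ + x₃) ^ 2 = c * (x₀ * x₂) ∧
      (x₀ + x₁ + x₂ + x₃) ^ 2 = c * (x₁ * x₃)) ∧ x₀ + x₁ + x₂ + x₃ = 0) ↔
    (x₀ * x₂ = 0 ∧ x₁ * x₃ = 0) ∧ x₀ + x₁ + x₂ + x₃ = 0 :=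
  and_congr_left fun hs => by simp [hs, hc, eq_comm (a := (0 : R))]

theorem mul_eq_zero_and_sum_eq_zero_iff_of_charTwo {R : Type*} [CommRing R] [NoZeroDivisors R]
    [CharP R 2] (x₀ x₁ x₂ x₃ : R) :
    (x₀ * x₂ = 0 ∧ x₁ * x₃ = 0) ∧ x₀ + x₁ + x₂ + x₃ = 0 ↔
    ∃ a : R,
      (x₀, x₁, x₂, x₃) = (a, 0, 0, a) ∨ (x₀, x₁, x₂, x₃) = (a, a, 0, 0) ∨
      (x₀, x₁, x₂, x₃) = (0, a, a, 0) ∨ (x₀, x₁, x₂, x₃) = (0, 0, a, a) := by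
  constructor
  · rintro ⟨⟨h₀₂, h₁₃⟩, hs⟩
    rcases mul_eq_zero.1 h₀₂ with rfl | rfl <;> rcases mul_eq_zero.1 h₁₃ with rfl | rfl <;>
      simp only [zero_add, add_zero, CharTwo.add_eq_zero] at hs
    · exact ⟨x₃, by simp [hs]⟩
    · exact ⟨x₂, by simp [hs]⟩
    · exact ⟨x₃, by simp [hs]⟩
    · exact ⟨x₁, by simp [hs]⟩
  · rintro ⟨a, h | h | h | h⟩ <;> simp only [Prod.mk.injEq] at h <;>
      obtain ⟨rfl, rfl, rfl, rfl⟩ := h <;> simp [CharTwo.add_self_eq_zero]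

theorem stmt_1 {k : Type*} [Field k] [CharP k 2] (c : k) (hc : c ≠ 0)
    (x₀ x₁ x₂ x₃ : k) (hx : (x₀, x₁, x₂, x₃) ≠ ((0 : k), (0 : k), (0 : k), (0 : k))) :
    (((x₀ + x₁ + x₂ + x₃) ^ 2 = c * (x₀ * x₂) ∧
      (x₀ + x₁ + x₂ + x₃) ^ 2 = c * (x₁ * x₃)) ∧
      x₀ + x₁ + x₂ + x₃ = 0) ↔
    ∃ a : k, a ≠ 0 ∧
      ((x₀, x₁, x₂, x₃) = (a, (0 : k), (0 : k), a) ∨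
       (x₀, x₁, x₂, x₃) = (a, a, (0 : k), (0 : k)) ∨
       (x₀, x₁, x₂, x₃) = ((0 : k), a, a, (0 : k)) ∨
       (x₀, x₁, x₂, x₃) = ((0 : k), (0 : k), a, a)) := by
  rw [onZ4NormalForm_and_sum_eq_zero_iff hc, mul_eq_zero_and_sum_eq_zero_iff_of_charTwo]
  constructor
  · rintro ⟨a, ha⟩
    refine ⟨a, ?_, ha⟩
    rintro rfl
    exact hx (by rcases ha with h | h | h | h <;> exact h)
  · rintro ⟨a, -, ha⟩
    exact ⟨a, ha⟩
end

section
/- If (x₀,x₁,x₂,x₃) lies on E_c, then x₀x₂ = x₁x₃ (so the point lies on the skew-Segre quadric), and the pair of projections ((x₀:x₁),(x₀:x₃)) satisfies the biquadratic equation of the image curve E₁ in P¹×P¹: (x₀+x₁)²(x₀+x₃)² = c·(x₀x₁)·(x₀x₃). -/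
theorem add_mul_add_eq_mul_sum_of_mul_eq_mul {R : Type*} [CommRing R] {x₀ x₁ x₂ x₃ : R}
    (h : x₀ * x₂ = x₁ * x₃) :
    (x₀ + x₁) * (x₀ + x₃) = x₀ * (x₀ + x₁ + x₂ + x₃) := by
  linear_combination -h

theorem stmt_2_general {k : Type*} [Field k] (c : k) (hc : c ≠ 0)
    (x₀ x₁ x₂ x₃ : k)
    (h1 : (x₀ + x₁ + x₂ + x₃) ^ 2 = c * (x₀ * x₂))
    (h2 : (x₀ + x₁ + x₂ + x₃) ^ 2 = c * (x₁ * x₃)) :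
    x₀ * x₂ = x₁ * x₃ ∧
    (x₀ + x₁) ^ 2 * (x₀ + x₃) ^ 2 = c * (x₀ * x₁) * (x₀ * x₃) := by
  have hquadric : x₀ * x₂ = x₁ * x₃ := mul_left_cancel₀ hc (h1.symm.trans h2)
  refine ⟨hquadric, ?_⟩
  rw [← mul_pow, add_mul_add_eq_mul_sum_of_mul_eq_mul hquadric, mul_pow, h2]
  ring

theorem stmt_2 {k : Type*} [Field k] [CharP k 2] (c : k) (hc : c ≠ 0)
    (x₀ x₁ x₂ x₃ : k)
    (h1 : (x₀ + x₁ + x₂ + x₃) ^ 2 = c * (x₀ * x₂))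
    (h2 : (x₀ + x₁ + x₂ + x₃) ^ 2 = c * (x₁ * x₃)) :
    x₀ * x₂ = x₁ * x₃ ∧
    (x₀ + x₁) ^ 2 * (x₀ + x₃) ^ 2 = c * (x₀ * x₁) * (x₀ * x₃) :=
  stmt_2_general c hc x₀ x₁ x₂ x₃ h1 h2
end

section
/- If (x₀,x₁,x₂,x₃) lies on E_c and (X,Y,Z) = (x₁+x₂, x₂, c(x₀+x₃)), then Y(Y+X)Z = X(X+c⁻¹Z)², i.e. the image lies on the Weierstrass curve Y(Y+X)Z = X(X+c⁻¹Z)². Moreover, if a nonzero (x₀,x₁,x₂,x₃) lies on E_c and x₁ = x₂ = 0, then x₀ = x₃, so the point is O = (1:0:0:1) (the unique point where the linear map vanishes). -/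
/-!
In characteristic 2 we have `Y + X = x₁` and `X + c⁻¹Z = x₀ + x₁ + x₂ + x₃ =: s`, so the
Weierstrass equation reads `c x₁ x₂ (x₀ + x₃) = (x₁ + x₂) s²`, which is `x₁` times the first
equation of `E_c` plus `x₂` times the second. If `x₁ = x₂ = 0`, the first equation gives
`(x₀ + x₃)² = 0`, hence `x₀ = x₃`.
-/

namespace CharTwo

variable {R : Type*} [CommRing R] [CharP R 2]

theorem eq_of_add_sq_eq_zero [IsReduced R] {a b : R} (h : (a + b) ^ 2 = 0) : a = b :=
  CharTwo.add_eq_zero.mp (sq_eq_zero_iff.mp h)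

theorem z4NormalForm_weierstrass {c x₀ x₁ x₂ x₃ : R}
    (h1 : (x₀ + x₁ + x₂ + x₃) ^ 2 = c * (x₀ * x₂))
    (h2 : (x₀ + x₁ + x₂ + x₃) ^ 2 = c * (x₁ * x₃)) :
    x₂ * (x₂ + (x₁ + x₂)) * (c * (x₀ + x₃)) = (x₁ + x₂) * ((x₁ + x₂) + (x₀ + x₃)) ^ 2 := by
  have hX_add_Y : x₂ + (x₁ + x₂) = x₁ := by
    rw [add_left_comm, CharTwo.add_self_eq_zero, add_zero]
  have hsum : x₁ + x₂ + (x₀ + x₃) = x₀ + x₁ + x₂ + x₃ := by ring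
  rw [hX_add_Y, hsum]
  linear_combination (-x₁) * h1 - x₂ * h2

end CharTwo

theorem stmt_4 {k : Type*} [Field k] [CharP k 2] (c : k) (hc : c ≠ 0)
    (x₀ x₁ x₂ x₃ : k)
    (h1 : (x₀ + x₁ + x₂ + x₃) ^ 2 = c * (x₀ * x₂))
    (h2 : (x₀ + x₁ + x₂ + x₃) ^ 2 = c * (x₁ * x₃)) :
    (x₂ * (x₂ + (x₁ + x₂)) * (c * (x₀ + x₃)) =
      (x₁ + x₂) * ((x₁ + x₂) + c⁻¹ * (c * (x₀ + x₃))) ^ 2) ∧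
    ((x₀, x₁, x₂, x₃) ≠ ((0 : k), (0 : k), (0 : k), (0 : k)) → x₁ = 0 → x₂ = 0 →
      x₀ = x₃ ∧ x₀ ≠ 0) := by
  refine ⟨?_, fun hne hx₁ hx₂ => ?_⟩
  · rw [inv_mul_cancel_left₀ hc]
    exact CharTwo.z4NormalForm_weierstrass h1 h2
  · subst hx₁ hx₂
    have hx₀x₃ : x₀ = x₃ := CharTwo.eq_of_add_sq_eq_zero <| by simpa using h1
    refine ⟨hx₀x₃, fun hx₀ => hne ?_⟩
    simp [← hx₀x₃, hx₀]
end

section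
/- If (x₀,x₁,x₂,x₃) lies on C_c and (X,Y,Z) = (c(x₁+x₃), x₀+cx₁+x₂, c⁴x₂), then Y(Y+X)Z = X(X+c⁻²Z)², i.e. the image lies on the Weierstrass curve Y(Y+X)Z = X(X+c⁻²Z)². Moreover, if a nonzero (x₀,x₁,x₂,x₃) lies on C_c and x₂ = 0, then (x₀,x₁,x₂,x₃) is a scalar multiple of (c,1,0,1), i.e. the point is O (the unique point where the hyperplane X₂ = 0 meets C_c). -/
/-! In characteristic 2 squaring is additive, so both curve equations become linear relations
between squares. Expanding `Y (Y + X)` and substituting the first equation leaves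
`c (x₀ + x₂)(x₁ + x₃)`, and the second equation turns `X (X + c² x₂)²` into the same
multiple of `c⁵ x₂`. On the hyperplane `x₂ = 0` the equations read `(x₁ + x₃)² = 0` and
`x₀² = (c x₁)²`, and squaring is injective. -/

namespace CharTwo

variable {R : Type*} [CommRing R] [CharP R 2]

theorem mu4_mul_add_eq {c x₀ x₁ x₂ x₃ : R} (h1 : (x₀ + x₂) ^ 2 = c ^ 2 * (x₁ * x₃)) :
    (x₀ + c * x₁ + x₂) * ((x₀ + c * x₁ + x₂) + c * (x₁ + x₃)) =
      c * (x₀ + x₂) * (x₁ + x₃) := by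
  linear_combination (norm := (ring_nf; simp only [two_eq_zero, mul_zero, add_zero])) h1

theorem mu4_weierstrass {c x₀ x₁ x₂ x₃ : R}
    (h1 : (x₀ + x₂) ^ 2 = c ^ 2 * (x₁ * x₃)) (h2 : (x₁ + x₃) ^ 2 = c ^ 2 * (x₀ * x₂)) :
    (x₀ + c * x₁ + x₂) * ((x₀ + c * x₁ + x₂) + c * (x₁ + x₃)) * (c ^ 4 * x₂) =
      c * (x₁ + x₃) * (c * (x₁ + x₃) + c ^ 2 * x₂) ^ 2 :=
  calc _ = c ^ 5 * x₂ * (x₀ + x₂) * (x₁ + x₃) := by rw [mu4_mul_add_eq h1]; ring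
    _ = c * (x₁ + x₃) * (c ^ 2 * (x₁ + x₃) ^ 2 + (c ^ 2 * x₂) ^ 2) := by rw [h2]; ring
    _ = c * (x₁ + x₃) * (c * (x₁ + x₃) + c ^ 2 * x₂) ^ 2 := by rw [add_sq (c * (x₁ + x₃))]; ring

theorem mu4_eq_of_x₂_eq_zero [NoZeroDivisors R] {c x₀ x₁ x₂ x₃ : R}
    (h1 : (x₀ + x₂) ^ 2 = c ^ 2 * (x₁ * x₃)) (h2 : (x₁ + x₃) ^ 2 = c ^ 2 * (x₀ * x₂))
    (hx₂ : x₂ = 0) : x₀ = c * x₁ ∧ x₃ = x₁ := by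
  subst hx₂
  have h31 : x₃ = x₁ := by
    rw [mul_zero, mul_zero, pow_eq_zero_iff two_ne_zero, CharTwo.add_eq_zero] at h2
    exact h2.symm
  refine ⟨sq_injective ?_, h31⟩
  simp only [add_zero, h31] at h1
  linear_combination h1

end CharTwo

theorem stmt_6_general {k : Type*} [Field k] [CharP k 2] (c : k)
    (x₀ x₁ x₂ x₃ : k)
    (h1 : (x₀ + x₂) ^ 2 = c ^ 2 * (x₁ * x₃))
    (h2 : (x₁ + x₃) ^ 2 = c ^ 2 * (x₀ * x₂)) :
    ((x₀ + c * x₁ + x₂) * ((x₀ + c * x₁ + x₂) + c * (x₁ + x₃)) * (c ^ 4 * x₂) =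
      (c * (x₁ + x₃)) * ((c * (x₁ + x₃)) + (c ^ 2)⁻¹ * (c ^ 4 * x₂)) ^ 2) ∧
    ((x₀, x₁, x₂, x₃) ≠ ((0 : k), (0 : k), (0 : k), (0 : k)) → x₂ = 0 →
      ∃ a : k, a ≠ 0 ∧ (x₀, x₁, x₂, x₃) = (c * a, a, (0 : k), a)) := by
  refine ⟨?_, fun hne hx₂ => ?_⟩
  · -- `c⁻² c⁴ = c²` holds also for `c = 0`, where `0⁻¹ = 0`.
    have hZ : (c ^ 2)⁻¹ * (c ^ 4 * x₂) = c ^ 2 * x₂ := by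
      rw [show c ^ 4 = c ^ 2 * c ^ 2 by ring, ← mul_assoc, ← mul_assoc, inv_mul_mul_self]
    rw [hZ]
    exact CharTwo.mu4_weierstrass h1 h2
  · obtain ⟨h0, h31⟩ := CharTwo.mu4_eq_of_x₂_eq_zero h1 h2 hx₂
    refine ⟨x₁, ?_, by rw [h0, h31, hx₂]⟩
    rintro rfl
    simp [h0, h31, hx₂] at hne

theorem stmt_6 {k : Type*} [Field k] [CharP k 2] (c : k) (hc : c ≠ 0)
    (x₀ x₁ x₂ x₃ : k)
    (h1 : (x₀ + x₂) ^ 2 = c ^ 2 * (x₁ * x₃))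
    (h2 : (x₁ + x₃) ^ 2 = c ^ 2 * (x₀ * x₂)) :
    ((x₀ + c * x₁ + x₂) * ((x₀ + c * x₁ + x₂) + c * (x₁ + x₃)) * (c ^ 4 * x₂) =
      (c * (x₁ + x₃)) * ((c * (x₁ + x₃)) + (c ^ 2)⁻¹ * (c ^ 4 * x₂)) ^ 2) ∧
    ((x₀, x₁, x₂, x₃) ≠ ((0 : k), (0 : k), (0 : k), (0 : k)) → x₂ = 0 →
      ∃ a : k, a ≠ 0 ∧ (x₀, x₁, x₂, x₃) = (c * a, a, (0 : k), a)) :=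
  stmt_6_general c x₀ x₁ x₂ x₃ h1 h2
end

section
/- If (x₀,x₁,x₂,x₃) lies on C_c, then the tuple (c·x₀(x₀+x₂), (x₁+x₃)(x₀+x₂), c·x₁(x₁+x₃), c²·x₀x₁) lies on E_{c²}, i.e. it satisfies (X₀+X₁+X₂+X₃)² = c²X₀X₂ = c²X₁X₃. (This is the isomorphism ι: C_c → E_{c²} given as the skew-Segre composition of the two projections π₁(x) = (cx₀ : x₁+x₃) and π₂(x) = (x₀+x₂ : cx₁).) -/
/-! In characteristic 2 squaring is additive, so with `u = x₀ + x₂` and `v = x₁ + x₃` the square of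
the coordinate sum is `c²x₀²u² + u²v² + c²x₁²v² + c⁴x₀²x₁²`. The curve equations `u² = c²x₁x₃` and
`v² = c²x₀x₂` turn this into `c⁴x₀x₁(x₀x₁ + x₀x₃ + x₁x₂ + x₂x₃) = c⁴x₀x₁uv`, which is also what both
right-hand sides `c²X₀X₂` and `c²X₁X₃` expand to. -/

theorem sq_coord_sum_eq_of_split_mu4 {R : Type*} [CommRing R] [CharP R 2] (c x₀ x₁ x₂ x₃ : R)
    (h1 : (x₀ + x₂) ^ 2 = c ^ 2 * (x₁ * x₃))
    (h2 : (x₁ + x₃) ^ 2 = c ^ 2 * (x₀ * x₂)) :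
    (c * (x₀ * (x₀ + x₂)) + (x₁ + x₃) * (x₀ + x₂) + c * (x₁ * (x₁ + x₃)) +
        c ^ 2 * (x₀ * x₁)) ^ 2 =
      c ^ 4 * (x₀ * x₁ * (x₀ + x₂) * (x₁ + x₃)) := by
  simp only [CharTwo.add_sq]
  linear_combination (c ^ 2 * x₀ ^ 2 + (x₁ + x₃) ^ 2) * h1 + c ^ 2 * (x₁ * x₃ + x₁ ^ 2) * h2

theorem stmt_8_general {k : Type*} [Field k] [CharP k 2] (c : k)
    (x₀ x₁ x₂ x₃ : k)
    (h1 : (x₀ + x₂) ^ 2 = c ^ 2 * (x₁ * x₃))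
    (h2 : (x₁ + x₃) ^ 2 = c ^ 2 * (x₀ * x₂)) :
    (c * (x₀ * (x₀ + x₂)) + (x₁ + x₃) * (x₀ + x₂) + c * (x₁ * (x₁ + x₃)) +
        c ^ 2 * (x₀ * x₁)) ^ 2 =
      c ^ 2 * ((c * (x₀ * (x₀ + x₂))) * (c * (x₁ * (x₁ + x₃)))) ∧
    (c * (x₀ * (x₀ + x₂)) + (x₁ + x₃) * (x₀ + x₂) + c * (x₁ * (x₁ + x₃)) +
        c ^ 2 * (x₀ * x₁)) ^ 2 =
      c ^ 2 * (((x₁ + x₃) * (x₀ + x₂)) * (c ^ 2 * (x₀ * x₁))) := by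
  rw [sq_coord_sum_eq_of_split_mu4 c x₀ x₁ x₂ x₃ h1 h2]
  constructor <;> ring

theorem stmt_8 {k : Type*} [Field k] [CharP k 2] (c : k) (hc : c ≠ 0)
    (x₀ x₁ x₂ x₃ : k)
    (h1 : (x₀ + x₂) ^ 2 = c ^ 2 * (x₁ * x₃))
    (h2 : (x₁ + x₃) ^ 2 = c ^ 2 * (x₀ * x₂)) :
    (c * (x₀ * (x₀ + x₂)) + (x₁ + x₃) * (x₀ + x₂) + c * (x₁ * (x₁ + x₃)) +
        c ^ 2 * (x₀ * x₁)) ^ 2 =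
      c ^ 2 * ((c * (x₀ * (x₀ + x₂))) * (c * (x₁ * (x₁ + x₃)))) ∧
    (c * (x₀ * (x₀ + x₂)) + (x₁ + x₃) * (x₀ + x₂) + c * (x₁ * (x₁ + x₃)) +
        c ^ 2 * (x₀ * x₁)) ^ 2 =
      c ^ 2 * (((x₁ + x₃) * (x₀ + x₂)) * (c ^ 2 * (x₀ * x₁))) :=
  stmt_8_general c x₀ x₁ x₂ x₃ h1 h2
end

section
/- Let (x₀,x₁,x₂,x₃) and (y₀,y₁,y₂,y₃) lie on E_c. Then the two basis elements of each addition law projection agree projectively: (x₀y₃+x₂y₁)(x₀y₁+x₂y₃) = (x₁y₀+x₃y₂)(x₁y₂+x₃y₀), and (x₀y₀+x₂y₂)(x₀y₂+x₂y₀) = (x₁y₁+x₃y₃)(x₁y₃+x₃y₁). (These identities express that the two listed bilinear addition laws for π₁∘μ, respectively for π₂∘μ, define the same rational map E_c × E_c → P¹ where both are defined.) -/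
/-!
In characteristic 2, `(a d + b e)(a e + b d) = (a + b)² d e + a b (d + e)²`. On `E_c` with `c ≠ 0`
one has `p := x₀x₂ = x₁x₃` and `q := y₀y₂ = y₁y₃`, so the two sides of either identity add up to
`q (x₀ + x₁ + x₂ + x₃)² + p (y₀ + y₁ + y₂ + y₃)² = 2cpq = 0`.
-/

theorem CharTwo.mul_add_mul_mul_mul_add_mul {R : Type*} [CommRing R] [CharP R 2] (a b d e : R) :
    (a * d + b * e) * (a * e + b * d) = (a + b) ^ 2 * (d * e) + a * b * (d + e) ^ 2 := by
  rw [CharTwo.add_sq, CharTwo.add_sq]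
  ring

theorem stmt_11 {k : Type*} [Field k] [CharP k 2] (c : k) (hc : c ≠ 0)
    (x₀ x₁ x₂ x₃ y₀ y₁ y₂ y₃ : k)
    (hx1 : (x₀ + x₁ + x₂ + x₃) ^ 2 = c * (x₀ * x₂))
    (hx2 : (x₀ + x₁ + x₂ + x₃) ^ 2 = c * (x₁ * x₃))
    (hy1 : (y₀ + y₁ + y₂ + y₃) ^ 2 = c * (y₀ * y₂))
    (hy2 : (y₀ + y₁ + y₂ + y₃) ^ 2 = c * (y₁ * y₃)) :
    (x₀ * y₃ + x₂ * y₁) * (x₀ * y₁ + x₂ * y₃) =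
      (x₁ * y₀ + x₃ * y₂) * (x₁ * y₂ + x₃ * y₀) ∧
    (x₀ * y₀ + x₂ * y₂) * (x₀ * y₂ + x₂ * y₀) =
      (x₁ * y₁ + x₃ * y₃) * (x₁ * y₃ + x₃ * y₁) := by
  have hx : x₀ * x₂ = x₁ * x₃ := mul_left_cancel₀ hc (hx1.symm.trans hx2)
  have hy : y₀ * y₂ = y₁ * y₃ := mul_left_cancel₀ hc (hy1.symm.trans hy2)
  have h2 : (2 : k) = 0 := CharTwo.two_eq_zero
  have hsum : (y₀ * y₂) * ((x₀ + x₂) ^ 2 + (x₁ + x₃) ^ 2)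
      + (x₀ * x₂) * ((y₀ + y₂) ^ 2 + (y₁ + y₃) ^ 2) = 0 := by
    rw [← CharTwo.add_sq, ← CharTwo.add_sq]
    linear_combination (y₀ * y₂) * hx1 + (x₀ * x₂) * hy1 + c * (x₀ * x₂) * (y₀ * y₂) * h2
  refine ⟨CharTwo.add_eq_zero.mp ?_, CharTwo.add_eq_zero.mp ?_⟩ <;>
    rw [CharTwo.mul_add_mul_mul_mul_add_mul, CharTwo.mul_add_mul_mul_mul_add_mul]
  · linear_combination hsum - (x₀ + x₂) ^ 2 * hy - (y₀ + y₂) ^ 2 * hx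
  · linear_combination hsum - (x₁ + x₃) ^ 2 * hy - (y₁ + y₃) ^ 2 * hx
end

section
/- Let (x₀,x₁,x₂,x₃) lie on E_c. Set a = x₀x₃+x₁x₂, b = x₀x₁+x₂x₃, p = (x₀+x₂)², q = (x₁+x₃)². Then a + b = (x₀+x₂)(x₁+x₃) (an identity of polynomials in characteristic 2), and the skew-Segre tuple (a·p, b·p, b·q, a·q) lies on E_c. (This is the duplication formula on E_c: π₁∘[2](x) = (a : b), π₂∘[2](x) = (p : q), composed with the skew-Segre embedding; the Karatsuba-type factorization of a+b underlies the 7M+2S duplication algorithm.) -/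
/-!
On `E_c` the two equations force `x₀x₂ = x₁x₃ =: m`, and with `s = x₀ + x₁ + x₂ + x₃` we get,
in characteristic 2, `p + q = s² = c m` and `a b = m s²`, while `(a + b)² = p q` always.
The skew-Segre image `(ap, bp, bq, aq)` has coordinate sum `(a + b)(p + q)`, whose square is
`p q · c m · c m = c (a p)(b q)`.
-/

namespace Z4NormalForm

variable {R : Type*} [CommRing R]

def OnCurve (c x₀ x₁ x₂ x₃ : R) : Prop :=
  (x₀ + x₁ + x₂ + x₃) ^ 2 = c * (x₀ * x₂) ∧ (x₀ + x₁ + x₂ + x₃) ^ 2 = c * (x₁ * x₃)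

theorem OnCurve.mul_eq_mul [NoZeroDivisors R] {c x₀ x₁ x₂ x₃ : R}
    (h : OnCurve c x₀ x₁ x₂ x₃) (hc : c ≠ 0) : x₀ * x₂ = x₁ * x₃ :=
  mul_left_cancel₀ hc (h.1.symm.trans h.2)

theorem onCurve_skewSegre {c a b p q : R} (hab : (a + b) ^ 2 = p * q)
    (hpq : (p + q) ^ 2 = c * (a * b)) : OnCurve c (a * p) (b * p) (b * q) (a * q) := by
  have hsq : (a * p + b * p + b * q + a * q) ^ 2 = (a + b) ^ 2 * (p + q) ^ 2 := by ring
  constructor <;> (rw [hsq, hab, hpq]; ring)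

end Z4NormalForm

theorem CharTwo.mul_eq_mul_sq_add_of_mul_eq_mul {R : Type*} [CommRing R] [CharP R 2]
    {x₀ x₁ x₂ x₃ : R} (h : x₀ * x₂ = x₁ * x₃) :
    (x₀ * x₃ + x₁ * x₂) * (x₀ * x₁ + x₂ * x₃) = x₀ * x₂ * (x₀ + x₁ + x₂ + x₃) ^ 2 := by
  simp only [CharTwo.add_sq]
  linear_combination -(x₀ ^ 2 + x₂ ^ 2) * h

open Z4NormalForm in
theorem stmt_12 {k : Type*} [Field k] [CharP k 2] (c : k) (hc : c ≠ 0)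
    (x₀ x₁ x₂ x₃ : k)
    (h1 : (x₀ + x₁ + x₂ + x₃) ^ 2 = c * (x₀ * x₂))
    (h2 : (x₀ + x₁ + x₂ + x₃) ^ 2 = c * (x₁ * x₃))
    (a b p q : k)
    (ha : a = x₀ * x₃ + x₁ * x₂) (hb : b = x₀ * x₁ + x₂ * x₃)
    (hp : p = (x₀ + x₂) ^ 2) (hq : q = (x₁ + x₃) ^ 2) :
    a + b = (x₀ + x₂) * (x₁ + x₃) ∧
    (a * p + b * p + b * q + a * q) ^ 2 = c * ((a * p) * (b * q)) ∧
    (a * p + b * p + b * q + a * q) ^ 2 = c * ((b * p) * (a * q)) := by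
  have hm : x₀ * x₂ = x₁ * x₃ := OnCurve.mul_eq_mul ⟨h1, h2⟩ hc
  have hsum : a + b = (x₀ + x₂) * (x₁ + x₃) := by rw [ha, hb]; ring
  have hpq : p + q = c * (x₀ * x₂) := by
    rw [hp, hq, ← CharTwo.add_sq, ← h1]; ring
  have hab : a * b = x₀ * x₂ * (c * (x₀ * x₂)) := by
    rw [ha, hb, CharTwo.mul_eq_mul_sq_add_of_mul_eq_mul hm, h1]
  refine ⟨hsum, onCurve_skewSegre ?_ ?_⟩
  · rw [hsum, hp, hq]; ring
  · rw [hpq, hab]; ring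
end

section
/- Let (x₀,x₁,x₂,x₃) and (y₀,y₁,y₂,y₃) lie on C_c. Then the tuple ((x₀y₀+x₂y₂)², c(x₀x₁y₀y₁+x₂x₃y₂y₃), (x₁y₁+x₃y₃)², c(x₀x₃y₀y₃+x₁x₂y₁y₂)) lies on C_c. (This is the closure of the first bidegree-(2,2) addition law on the split μ₄-normal form.) -/
/-!
Write `A = x₀y₀ + x₂y₂`, `B = x₁y₁ + x₃y₃` and `A' = x₀y₂ + x₂y₀`, `B' = x₁y₃ + x₃y₁`. In
characteristic 2 the curve equations read `x₀² + x₂² = c²x₁x₃`, `x₁² + x₃² = c²x₀x₂`, and the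
two-square identity gives `c⁴x₁x₃y₁y₃ = A² + A'²`, `c⁴x₀x₂y₀y₂ = B² + B'²`. Expanding, the
right side of the first equation becomes `A⁴ + B⁴ + (AA')² + (BB')²`, and the curve equations
force `AA' = BB'`, so it collapses to `(A² + B²)²`. The second equation holds identically,
since the two middle coordinates add up to `cAB`.
-/

namespace SplitMu4

variable {R : Type*} [CommRing R]

theorem cross_mul_eq {c x₀ x₁ x₂ x₃ y₀ y₁ y₂ y₃ : R}
    (hx₁ : x₀ ^ 2 + x₂ ^ 2 = c ^ 2 * (x₁ * x₃)) (hx₂ : x₁ ^ 2 + x₃ ^ 2 = c ^ 2 * (x₀ * x₂))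
    (hy₁ : y₀ ^ 2 + y₂ ^ 2 = c ^ 2 * (y₁ * y₃)) (hy₂ : y₁ ^ 2 + y₃ ^ 2 = c ^ 2 * (y₀ * y₂)) :
    (x₀ * y₂ + x₂ * y₀) * (x₀ * y₀ + x₂ * y₂) = (x₁ * y₃ + x₃ * y₁) * (x₁ * y₁ + x₃ * y₃) := by
  linear_combination y₀ * y₂ * hx₁ + x₀ * x₂ * hy₁ - y₁ * y₃ * hx₂ - x₁ * x₃ * hy₂

variable [CharP R 2]

theorem _root_.CharTwo.sq_add_sq_mul_sq_add_sq (a b c d : R) :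
    (a ^ 2 + b ^ 2) * (c ^ 2 + d ^ 2) = (a * c + b * d) ^ 2 + (a * d + b * c) ^ 2 := by
  linear_combination (-2 * a * b * c * d) * CharTwo.two_eq_zero (R := R)

theorem addLaw_first_equation {c x₀ x₁ x₂ x₃ y₀ y₁ y₂ y₃ : R}
    (hx₁ : (x₀ + x₂) ^ 2 = c ^ 2 * (x₁ * x₃)) (hx₂ : (x₁ + x₃) ^ 2 = c ^ 2 * (x₀ * x₂))
    (hy₁ : (y₀ + y₂) ^ 2 = c ^ 2 * (y₁ * y₃)) (hy₂ : (y₁ + y₃) ^ 2 = c ^ 2 * (y₀ * y₂)) :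
    ((x₀ * y₀ + x₂ * y₂) ^ 2 + (x₁ * y₁ + x₃ * y₃) ^ 2) ^ 2 =
      c ^ 2 * ((c * (x₀ * x₁ * (y₀ * y₁) + x₂ * x₃ * (y₂ * y₃))) *
        (c * (x₀ * x₃ * (y₀ * y₃) + x₁ * x₂ * (y₁ * y₂)))) := by
  rw [CharTwo.add_sq] at hx₁ hx₂ hy₁ hy₂
  have hcross := cross_mul_eq hx₁ hx₂ hy₁ hy₂
  set A := x₀ * y₀ + x₂ * y₂
  set B := x₁ * y₁ + x₃ * y₃
  calc (A ^ 2 + B ^ 2) ^ 2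
      = A ^ 4 + B ^ 4 + (((x₀ * y₂ + x₂ * y₀) * A) ^ 2 + ((x₁ * y₃ + x₃ * y₁) * B) ^ 2) := by
        rw [hcross, CharTwo.add_self_eq_zero, CharTwo.add_sq]; ring
    _ = (x₀ ^ 2 + x₂ ^ 2) * (y₀ ^ 2 + y₂ ^ 2) * A ^ 2
          + (x₁ ^ 2 + x₃ ^ 2) * (y₁ ^ 2 + y₃ ^ 2) * B ^ 2 := by
        rw [CharTwo.sq_add_sq_mul_sq_add_sq, CharTwo.sq_add_sq_mul_sq_add_sq]; ring
    _ = c ^ 2 * (x₁ * x₃) * (c ^ 2 * (y₁ * y₃)) * ((x₀ * y₀) ^ 2 + (x₂ * y₂) ^ 2)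
          + c ^ 2 * (x₀ * x₂) * (c ^ 2 * (y₀ * y₂)) * ((x₁ * y₁) ^ 2 + (x₃ * y₃) ^ 2) := by
        rw [hx₁, hy₁, hx₂, hy₂, CharTwo.add_sq, CharTwo.add_sq]
    _ = _ := by ring

end SplitMu4

theorem stmt_13_general {k : Type*} [Field k] [CharP k 2] (c : k)
    (x₀ x₁ x₂ x₃ y₀ y₁ y₂ y₃ : k)
    (hx1 : (x₀ + x₂) ^ 2 = c ^ 2 * (x₁ * x₃))
    (hx2 : (x₁ + x₃) ^ 2 = c ^ 2 * (x₀ * x₂))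
    (hy1 : (y₀ + y₂) ^ 2 = c ^ 2 * (y₁ * y₃))
    (hy2 : (y₁ + y₃) ^ 2 = c ^ 2 * (y₀ * y₂)) :
    ((x₀ * y₀ + x₂ * y₂) ^ 2 + (x₁ * y₁ + x₃ * y₃) ^ 2) ^ 2 =
      c ^ 2 * ((c * (x₀ * x₁ * (y₀ * y₁) + x₂ * x₃ * (y₂ * y₃))) *
        (c * (x₀ * x₃ * (y₀ * y₃) + x₁ * x₂ * (y₁ * y₂)))) ∧
    (c * (x₀ * x₁ * (y₀ * y₁) + x₂ * x₃ * (y₂ * y₃)) +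
        c * (x₀ * x₃ * (y₀ * y₃) + x₁ * x₂ * (y₁ * y₂))) ^ 2 =
      c ^ 2 * ((x₀ * y₀ + x₂ * y₂) ^ 2 * (x₁ * y₁ + x₃ * y₃) ^ 2) :=
  ⟨SplitMu4.addLaw_first_equation hx1 hx2 hy1 hy2, by ring⟩

theorem stmt_13 {k : Type*} [Field k] [CharP k 2] (c : k) (hc : c ≠ 0)
    (x₀ x₁ x₂ x₃ y₀ y₁ y₂ y₃ : k)
    (hx1 : (x₀ + x₂) ^ 2 = c ^ 2 * (x₁ * x₃))
    (hx2 : (x₁ + x₃) ^ 2 = c ^ 2 * (x₀ * x₂))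
    (hy1 : (y₀ + y₂) ^ 2 = c ^ 2 * (y₁ * y₃))
    (hy2 : (y₁ + y₃) ^ 2 = c ^ 2 * (y₀ * y₂)) :
    ((x₀ * y₀ + x₂ * y₂) ^ 2 + (x₁ * y₁ + x₃ * y₃) ^ 2) ^ 2 =
      c ^ 2 * ((c * (x₀ * x₁ * (y₀ * y₁) + x₂ * x₃ * (y₂ * y₃))) *
        (c * (x₀ * x₃ * (y₀ * y₃) + x₁ * x₂ * (y₁ * y₂)))) ∧
    (c * (x₀ * x₁ * (y₀ * y₁) + x₂ * x₃ * (y₂ * y₃)) +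
        c * (x₀ * x₃ * (y₀ * y₃) + x₁ * x₂ * (y₁ * y₂))) ^ 2 =
      c ^ 2 * ((x₀ * y₀ + x₂ * y₂) ^ 2 * (x₁ * y₁ + x₃ * y₃) ^ 2) :=
  stmt_13_general c x₀ x₁ x₂ x₃ y₀ y₁ y₂ y₃ hx1 hx2 hy1 hy2
end

section
/- Let (x₀,x₁,x₂,x₃) lie on C_c. Evaluating the first addition law at (x, O) with O = (c,1,0,1) yields exactly c²x₀·(x₀,x₁,x₂,x₃): namely ((x₀·c+x₂·0)², c(x₀x₁·c·1+x₂x₃·0·1), (x₁·1+x₃·1)², c(x₀x₃·c·1+x₁x₂·1·0)) = (c²x₀², c²x₀x₁, c²x₀x₂, c²x₀x₃), using (x₁+x₃)² = c²x₀x₂. Consequently this tuple is the zero tuple if and only if x₀ = 0; moreover any nonzero point of C_c with x₀ = 0 is a scalar multiple of (0,1,c,1) (the 2-torsion point S, identifying the exceptional divisor 4Δ_S of this addition law). -/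
/-!
Adding the identity `O = (c : 1 : 0 : 1)` with the first addition law multiplies every coordinate
by `c²x₀`; only the third coordinate needs the curve, through `(x₁ + x₃)² = c²x₀x₂`. On the
hyperplane `x₀ = 0` the curve equations become `(x₁ + x₃)² = 0` and `x₂² = (c x₁)²`, and since
squaring is injective in characteristic 2 they force the point to be `x₁ • (0, 1, c, 1)`.
-/

namespace MuFourNormalForm

variable {R : Type*} [CommRing R]

/-- The first addition law of the split μ₄-normal form `C_c`. -/
def addLaw (c : R) : R × R × R × R → R × R × R × R → R × R × R × R
  | (x₀, x₁, x₂, x₃), (y₀, y₁, y₂, y₃) =>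
    ((x₀ * y₀ + x₂ * y₂) ^ 2, c * (x₀ * x₁ * (y₀ * y₁) + x₂ * x₃ * (y₂ * y₃)),
      (x₁ * y₁ + x₃ * y₃) ^ 2, c * (x₀ * x₃ * (y₀ * y₃) + x₁ * x₂ * (y₁ * y₂)))

theorem addLaw_identity {c x₀ x₁ x₂ x₃ : R} (h2 : (x₁ + x₃) ^ 2 = c ^ 2 * (x₀ * x₂)) :
    addLaw c (x₀, x₁, x₂, x₃) (c, 1, 0, 1) =
      (c ^ 2 * x₀ ^ 2, c ^ 2 * (x₀ * x₁), c ^ 2 * (x₀ * x₂), c ^ 2 * (x₀ * x₃)) := by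
  simp only [addLaw, Prod.mk.injEq]
  exact ⟨by ring, by ring, by linear_combination h2, by ring⟩

theorem scaled_eq_zero_iff [NoZeroDivisors R] {c : R} (hc : c ≠ 0) (x₀ x₁ x₂ x₃ : R) :
    (c ^ 2 * x₀ ^ 2, c ^ 2 * (x₀ * x₁), c ^ 2 * (x₀ * x₂), c ^ 2 * (x₀ * x₃)) =
      ((0 : R), (0 : R), (0 : R), (0 : R)) ↔ x₀ = 0 := by
  simp +contextual [hc]

theorem eq_of_fst_eq_zero [CharP R 2] [NoZeroDivisors R] {c x₁ x₂ x₃ : R}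
    (h1 : (0 + x₂) ^ 2 = c ^ 2 * (x₁ * x₃)) (h2 : (x₁ + x₃) ^ 2 = c ^ 2 * (0 * x₂)) :
    x₃ = x₁ ∧ x₂ = c * x₁ := by
  have hx₃ : x₃ = x₁ := by
    rw [zero_mul, mul_zero, pow_eq_zero_iff two_ne_zero, CharTwo.add_eq_zero] at h2
    exact h2.symm
  subst hx₃
  refine ⟨rfl, CharTwo.sq_inj.mp ?_⟩
  linear_combination h1

end MuFourNormalForm

open MuFourNormalForm in
theorem stmt_14 {k : Type*} [Field k] [CharP k 2] (c : k) (hc : c ≠ 0)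
    (x₀ x₁ x₂ x₃ : k)
    (h1 : (x₀ + x₂) ^ 2 = c ^ 2 * (x₁ * x₃))
    (h2 : (x₁ + x₃) ^ 2 = c ^ 2 * (x₀ * x₂)) :
    (((x₀ * c + x₂ * 0) ^ 2,
      c * (x₀ * x₁ * (c * 1) + x₂ * x₃ * (0 * 1)),
      (x₁ * 1 + x₃ * 1) ^ 2,
      c * (x₀ * x₃ * (c * 1) + x₁ * x₂ * (1 * 0))) =
      (c ^ 2 * x₀ ^ 2, c ^ 2 * (x₀ * x₁), c ^ 2 * (x₀ * x₂), c ^ 2 * (x₀ * x₃))) ∧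
    ((c ^ 2 * x₀ ^ 2, c ^ 2 * (x₀ * x₁), c ^ 2 * (x₀ * x₂), c ^ 2 * (x₀ * x₃)) =
      ((0 : k), (0 : k), (0 : k), (0 : k)) ↔ x₀ = 0) ∧
    ((x₀, x₁, x₂, x₃) ≠ ((0 : k), (0 : k), (0 : k), (0 : k)) → x₀ = 0 →
      ∃ a : k, a ≠ 0 ∧ (x₀, x₁, x₂, x₃) = ((0 : k), a, c * a, a)) := by
  refine ⟨addLaw_identity h2, scaled_eq_zero_iff hc x₀ x₁ x₂ x₃, fun hne hx₀ => ?_⟩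
  subst hx₀
  obtain ⟨hx₃, hx₂⟩ := eq_of_fst_eq_zero h1 h2
  refine ⟨x₁, fun hx₁ => hne ?_, by rw [hx₃, hx₂]⟩
  simp [hx₁, hx₂, hx₃]
end

section
/- If (x₀,x₁,x₂,x₃) lies on C_c, then the duplication tuple ((x₀+x₂)⁴, c(x₀x₁+x₂x₃)², (x₁+x₃)⁴, c(x₀x₃+x₁x₂)²) also lies on C_c. (This is the duplication morphism [2] on the split μ₄-normal form.) -/
/-!
Write `A = x₀x₁ + x₂x₃` and `B = x₀x₃ + x₁x₂`. In characteristic 2,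
`A·B = x₁x₃(x₀ + x₂)² + x₀x₂(x₁ + x₃)²`, so on `C_c` the two curve equations give
`(x₀ + x₂)⁴ + (x₁ + x₃)⁴ = c²·A·B`; squaring this is the first equation for the doubled point.
The second one holds on all of `k⁴`: `(x₀ + x₂)(x₁ + x₃) = A + B`, and squaring is additive.
-/

theorem CharTwo.mul_sq_add_mul_sq_sq {R : Type*} [CommRing R] [CharP R 2] (c a b : R) :
    (c * a ^ 2 + c * b ^ 2) ^ 2 = c ^ 2 * (a + b) ^ 4 := by
  rw [← mul_add, ← CharTwo.add_sq]
  ring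

namespace SplitMu4

variable {R : Type*} [CommRing R] [CharP R 2]

theorem cross_mul_cross (x₀ x₁ x₂ x₃ : R) :
    (x₀ * x₁ + x₂ * x₃) * (x₀ * x₃ + x₁ * x₂) =
      x₁ * x₃ * (x₀ + x₂) ^ 2 + x₀ * x₂ * (x₁ + x₃) ^ 2 := by
  linear_combination (-2 * x₀ * x₁ * x₂ * x₃) * CharTwo.two_eq_zero (R := R)

theorem pow_four_add_pow_four {c x₀ x₁ x₂ x₃ : R}
    (h1 : (x₀ + x₂) ^ 2 = c ^ 2 * (x₁ * x₃)) (h2 : (x₁ + x₃) ^ 2 = c ^ 2 * (x₀ * x₂)) :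
    (x₀ + x₂) ^ 4 + (x₁ + x₃) ^ 4 = c ^ 2 * ((x₀ * x₁ + x₂ * x₃) * (x₀ * x₃ + x₁ * x₂)) := by
  rw [cross_mul_cross]
  linear_combination (x₀ + x₂) ^ 2 * h1 + (x₁ + x₃) ^ 2 * h2

end SplitMu4

theorem stmt_15_general {k : Type*} [Field k] [CharP k 2] (c : k)
    (x₀ x₁ x₂ x₃ : k)
    (h1 : (x₀ + x₂) ^ 2 = c ^ 2 * (x₁ * x₃))
    (h2 : (x₁ + x₃) ^ 2 = c ^ 2 * (x₀ * x₂)) :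
    ((x₀ + x₂) ^ 4 + (x₁ + x₃) ^ 4) ^ 2 =
      c ^ 2 * ((c * (x₀ * x₁ + x₂ * x₃) ^ 2) * (c * (x₀ * x₃ + x₁ * x₂) ^ 2)) ∧
    (c * (x₀ * x₁ + x₂ * x₃) ^ 2 + c * (x₀ * x₃ + x₁ * x₂) ^ 2) ^ 2 =
      c ^ 2 * ((x₀ + x₂) ^ 4 * (x₁ + x₃) ^ 4) := by
  constructor
  · rw [SplitMu4.pow_four_add_pow_four h1 h2]
    ring
  · have hsum : (x₀ + x₂) * (x₁ + x₃) = (x₀ * x₁ + x₂ * x₃) + (x₀ * x₃ + x₁ * x₂) := by ring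
    rw [CharTwo.mul_sq_add_mul_sq_sq, ← hsum]
    ring

theorem stmt_15 {k : Type*} [Field k] [CharP k 2] (c : k) (hc : c ≠ 0)
    (x₀ x₁ x₂ x₃ : k)
    (h1 : (x₀ + x₂) ^ 2 = c ^ 2 * (x₁ * x₃))
    (h2 : (x₁ + x₃) ^ 2 = c ^ 2 * (x₀ * x₂)) :
    ((x₀ + x₂) ^ 4 + (x₁ + x₃) ^ 4) ^ 2 =
      c ^ 2 * ((c * (x₀ * x₁ + x₂ * x₃) ^ 2) * (c * (x₀ * x₃ + x₁ * x₂) ^ 2)) ∧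
    (c * (x₀ * x₁ + x₂ * x₃) ^ 2 + c * (x₀ * x₃ + x₁ * x₂) ^ 2) ^ 2 =
      c ^ 2 * ((x₀ + x₂) ^ 4 * (x₁ + x₃) ^ 4) :=
  stmt_15_general c x₀ x₁ x₂ x₃ h1 h2
end

section
/- Let (x₀,x₁,x₂,x₃) lie on C_c, and set F = (x₀+cx₃)(cx₁+x₂) and G = (x₀+cx₁)(x₂+cx₃). Then F + G = c(x₀+x₂)(x₁+x₃) (an identity of polynomials in characteristic 2), and on C_c the following hold (stated with denominators cleared): c⁶(x₀x₁+x₂x₃)² = c⁴(x₀+x₂)⁴ + (x₁+x₃)⁴ + c⁴F² and c⁶(x₀x₃+x₁x₂)² = c⁴(x₀+x₂)⁴ + (x₁+x₃)⁴ + c⁴G². (These identities underlie the 2M+5S duplication algorithm on C_c.) -/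
/-!
In characteristic 2 squaring is additive, so
`((x₀ + c x₃)(c x₁ + x₂))² = (x₀² + c² x₃²)(c² x₁² + x₂²)`, and expanding shows
`F² + (x₀ x₂)² + c⁴ (x₁ x₃)² = c² (x₀ x₁ + x₂ x₃)²`. On `C_c` the curve equations, squared, give
`c⁴ (x₀ + x₂)⁴ + (x₁ + x₃)⁴ = c⁸ (x₁ x₃)² + c⁴ (x₀ x₂)²`, which turns this identity into the
claimed one. The identity for `G` is the same one after swapping `x₁` and `x₃`, a symmetry of `C_c`.
-/

namespace CharTwo

variable {R : Type*} [CommRing R] [CharP R 2]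

theorem mul_add_mul_add_mul_add_mul (c x₀ x₁ x₂ x₃ : R) :
    (x₀ + c * x₃) * (c * x₁ + x₂) + (x₀ + c * x₁) * (x₂ + c * x₃) =
      c * ((x₀ + x₂) * (x₁ + x₃)) := by
  linear_combination (x₀ * x₂ + c ^ 2 * x₁ * x₃) * two_eq_zero (R := R)

theorem sq_mul_add_sq_add_sq (c x₀ x₁ x₂ x₃ : R) :
    ((x₀ + c * x₃) * (c * x₁ + x₂)) ^ 2 + (x₀ * x₂) ^ 2 + c ^ 4 * (x₁ * x₃) ^ 2 =
      c ^ 2 * (x₀ * x₁ + x₂ * x₃) ^ 2 := by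
  rw [mul_pow, add_sq, add_sq, add_sq]
  linear_combination (x₀ ^ 2 * x₂ ^ 2 + c ^ 4 * x₁ ^ 2 * x₃ ^ 2) * two_eq_zero (R := R)

theorem sq_mul_add_mul_of_muFour {c x₀ x₁ x₂ x₃ : R}
    (h₁ : (x₀ + x₂) ^ 2 = c ^ 2 * (x₁ * x₃)) (h₂ : (x₁ + x₃) ^ 2 = c ^ 2 * (x₀ * x₂)) :
    c ^ 6 * (x₀ * x₁ + x₂ * x₃) ^ 2 =
      c ^ 4 * (x₀ + x₂) ^ 4 + (x₁ + x₃) ^ 4 + c ^ 4 * ((x₀ + c * x₃) * (c * x₁ + x₂)) ^ 2 := by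
  calc c ^ 6 * (x₀ * x₁ + x₂ * x₃) ^ 2
      = c ^ 4 * (c ^ 2 * (x₀ * x₁ + x₂ * x₃) ^ 2) := by ring
    _ = c ^ 4 * (((x₀ + c * x₃) * (c * x₁ + x₂)) ^ 2 + (x₀ * x₂) ^ 2 + c ^ 4 * (x₁ * x₃) ^ 2) := by
      rw [sq_mul_add_sq_add_sq]
    _ = c ^ 4 * (c ^ 2 * (x₁ * x₃)) ^ 2 + (c ^ 2 * (x₀ * x₂)) ^ 2 +
          c ^ 4 * ((x₀ + c * x₃) * (c * x₁ + x₂)) ^ 2 := by ring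
    _ = _ := by rw [← h₁, ← h₂]; ring

end CharTwo

theorem stmt_16_general {k : Type*} [Field k] [CharP k 2] (c : k)
    (x₀ x₁ x₂ x₃ : k)
    (h1 : (x₀ + x₂) ^ 2 = c ^ 2 * (x₁ * x₃))
    (h2 : (x₁ + x₃) ^ 2 = c ^ 2 * (x₀ * x₂))
    (F G : k)
    (hF : F = (x₀ + c * x₃) * (c * x₁ + x₂))
    (hG : G = (x₀ + c * x₁) * (x₂ + c * x₃)) :
    F + G = c * ((x₀ + x₂) * (x₁ + x₃)) ∧
    c ^ 6 * (x₀ * x₁ + x₂ * x₃) ^ 2 =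
      c ^ 4 * (x₀ + x₂) ^ 4 + (x₁ + x₃) ^ 4 + c ^ 4 * F ^ 2 ∧
    c ^ 6 * (x₀ * x₃ + x₁ * x₂) ^ 2 =
      c ^ 4 * (x₀ + x₂) ^ 4 + (x₁ + x₃) ^ 4 + c ^ 4 * G ^ 2 := by
  subst hF hG
  have hG_swap := CharTwo.sq_mul_add_mul_of_muFour (c := c) (x₀ := x₀) (x₁ := x₃) (x₂ := x₂) (x₃ := x₁)
    (by rw [h1, mul_comm x₁]) (by rw [add_comm, h2])
  refine ⟨CharTwo.mul_add_mul_add_mul_add_mul c x₀ x₁ x₂ x₃,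
    CharTwo.sq_mul_add_mul_of_muFour h1 h2, ?_⟩
  linear_combination hG_swap

theorem stmt_16 {k : Type*} [Field k] [CharP k 2] (c : k) (hc : c ≠ 0)
    (x₀ x₁ x₂ x₃ : k)
    (h1 : (x₀ + x₂) ^ 2 = c ^ 2 * (x₁ * x₃))
    (h2 : (x₁ + x₃) ^ 2 = c ^ 2 * (x₀ * x₂))
    (F G : k)
    (hF : F = (x₀ + c * x₃) * (c * x₁ + x₂))
    (hG : G = (x₀ + c * x₁) * (x₂ + c * x₃)) :
    F + G = c * ((x₀ + x₂) * (x₁ + x₃)) ∧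
    c ^ 6 * (x₀ * x₁ + x₂ * x₃) ^ 2 =
      c ^ 4 * (x₀ + x₂) ^ 4 + (x₁ + x₃) ^ 4 + c ^ 4 * F ^ 2 ∧
    c ^ 6 * (x₀ * x₃ + x₁ * x₂) ^ 2 =
      c ^ 4 * (x₀ + x₂) ^ 4 + (x₁ + x₃) ^ 4 + c ^ 4 * G ^ 2 :=
  stmt_16_general c x₀ x₁ x₂ x₃ h1 h2 F G hF hG
end

section
/- Let (s₀,s₁,s₂,s₃) and (x₀,x₁,x₂,x₃) both lie on C_c. Set U₀ = c·x₀, U₁ = x₁+x₃, V₀ = s₀x₀+s₂x₂, V₁ = s₁x₁+s₃x₃ (so that (U₀:U₁) is the Kummer image of Q = x and (V₀:V₁) that of Q−S for S = s). Then s₀(U₀V₁+U₁V₀)² + s₂(U₀V₀+U₁V₁)² = c(s₁+s₃)·U₀U₁V₀V₁ . (This is the defining equation of the Kummer-oriented curve K(Δ_S) ⊂ K×K for the split μ₄-normal form.) -/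
/-!
In characteristic 2 squaring is additive, so the left-hand side equals
`U₀² (s₀V₁² + s₂V₀²) + U₁² (s₀V₀² + s₂V₁²)`. With `U₀² = c²x₀²` and, by the curve equation of `Q`,
`U₁² = c²x₀x₂`, it becomes `c²x₀V₀ (V₁² + V₀(s₂x₀ + s₀x₂))`, while the right-hand side is
`c²x₀V₀ (s₁+s₃)(x₁+x₃)V₁`. For the remaining identity
`V₁² + V₀(s₂x₀ + s₀x₂) = (s₁+s₃)(x₁+x₃)V₁`, the curve equations of `S` and `Q` give
`V₀(s₂x₀ + s₀x₂) = s₀s₂(x₀+x₂)² + (s₀+s₂)²x₀x₂ = (s₁+s₃)²x₁x₃ + s₁s₃(x₁+x₃)²`.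
-/

section SplitMu4

variable {R : Type*} [CommRing R] [CharP R 2]

def IsOnSplitMu4 (c x₀ x₁ x₂ x₃ : R) : Prop :=
  (x₀ + x₂) ^ 2 = c ^ 2 * (x₁ * x₃) ∧ (x₁ + x₃) ^ 2 = c ^ 2 * (x₀ * x₂)

theorem mul_swap_eq_of_charTwo (a b x y : R) :
    (a * x + b * y) * (b * x + a * y) = a * b * (x + y) ^ 2 + (a + b) ^ 2 * (x * y) := by
  linear_combination (-2 * a * b * x * y) * CharTwo.two_eq_zero (R := R)

theorem IsOnSplitMu4.sq_add_mul_swap_eq {c s₀ s₁ s₂ s₃ x₀ x₁ x₂ x₃ : R}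
    (hs : IsOnSplitMu4 c s₀ s₁ s₂ s₃) (hx : IsOnSplitMu4 c x₀ x₁ x₂ x₃) :
    (s₁ * x₁ + s₃ * x₃) ^ 2 + (s₀ * x₀ + s₂ * x₂) * (s₂ * x₀ + s₀ * x₂) =
      (s₁ + s₃) * (x₁ + x₃) * (s₁ * x₁ + s₃ * x₃) := by
  obtain ⟨hs1, hs2⟩ := hs
  obtain ⟨hx1, hx2⟩ := hx
  have swap : (s₀ * x₀ + s₂ * x₂) * (s₂ * x₀ + s₀ * x₂) =
      (s₁ + s₃) ^ 2 * (x₁ * x₃) + s₁ * s₃ * (x₁ + x₃) ^ 2 := by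
    rw [mul_swap_eq_of_charTwo, hx1, hs1]
    linear_combination (x₁ * x₃) * hs2.symm + (s₁ * s₃) * hx2.symm
  rw [swap]
  linear_combination (2 * s₁ * s₃ * x₁ * x₃) * CharTwo.two_eq_zero (R := R)

end SplitMu4

theorem stmt_18_general {k : Type*} [Field k] [CharP k 2] (c : k)
    (s₀ s₁ s₂ s₃ x₀ x₁ x₂ x₃ : k)
    (hs1 : (s₀ + s₂) ^ 2 = c ^ 2 * (s₁ * s₃))
    (hs2 : (s₁ + s₃) ^ 2 = c ^ 2 * (s₀ * s₂))
    (hx1 : (x₀ + x₂) ^ 2 = c ^ 2 * (x₁ * x₃))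
    (hx2 : (x₁ + x₃) ^ 2 = c ^ 2 * (x₀ * x₂))
    (U₀ U₁ V₀ V₁ : k)
    (hU₀ : U₀ = c * x₀) (hU₁ : U₁ = x₁ + x₃)
    (hV₀ : V₀ = s₀ * x₀ + s₂ * x₂) (hV₁ : V₁ = s₁ * x₁ + s₃ * x₃) :
    s₀ * (U₀ * V₁ + U₁ * V₀) ^ 2 + s₂ * (U₀ * V₀ + U₁ * V₁) ^ 2 =
      c * (s₁ + s₃) * (U₀ * U₁ * (V₀ * V₁)) := by
  have key : V₁ ^ 2 + V₀ * (s₂ * x₀ + s₀ * x₂) = (s₁ + s₃) * (x₁ + x₃) * V₁ := by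
    rw [hV₀, hV₁]
    exact IsOnSplitMu4.sq_add_mul_swap_eq ⟨hs1, hs2⟩ ⟨hx1, hx2⟩
  calc s₀ * (U₀ * V₁ + U₁ * V₀) ^ 2 + s₂ * (U₀ * V₀ + U₁ * V₁) ^ 2
      = U₀ ^ 2 * (s₀ * V₁ ^ 2 + s₂ * V₀ ^ 2) + U₁ ^ 2 * (s₀ * V₀ ^ 2 + s₂ * V₁ ^ 2) := by
        simp only [CharTwo.add_sq, mul_pow]
        ring
    _ = c ^ 2 * x₀ * V₀ * (V₁ ^ 2 + V₀ * (s₂ * x₀ + s₀ * x₂)) := by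
        rw [hU₀, hU₁, hx2]
        linear_combination (c ^ 2 * x₀ * V₁ ^ 2) * hV₀.symm
    _ = c * (s₁ + s₃) * (U₀ * U₁ * (V₀ * V₁)) := by
        rw [key, hU₀, hU₁]
        ring

theorem stmt_18 {k : Type*} [Field k] [CharP k 2] (c : k) (hc : c ≠ 0)
    (s₀ s₁ s₂ s₃ x₀ x₁ x₂ x₃ : k)
    (hs1 : (s₀ + s₂) ^ 2 = c ^ 2 * (s₁ * s₃))
    (hs2 : (s₁ + s₃) ^ 2 = c ^ 2 * (s₀ * s₂))
    (hx1 : (x₀ + x₂) ^ 2 = c ^ 2 * (x₁ * x₃))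
    (hx2 : (x₁ + x₃) ^ 2 = c ^ 2 * (x₀ * x₂))
    (U₀ U₁ V₀ V₁ : k)
    (hU₀ : U₀ = c * x₀) (hU₁ : U₁ = x₁ + x₃)
    (hV₀ : V₀ = s₀ * x₀ + s₂ * x₂) (hV₁ : V₁ = s₁ * x₁ + s₃ * x₃) :
    s₀ * (U₀ * V₁ + U₁ * V₀) ^ 2 + s₂ * (U₀ * V₀ + U₁ * V₁) ^ 2 =
      c * (s₁ + s₃) * (U₀ * U₁ * (V₀ * V₁)) :=
  stmt_18_general c s₀ s₁ s₂ s₃ x₀ x₁ x₂ x₃ hs1 hs2 hx1 hx2 U₀ U₁ V₀ V₁ hU₀ hU₁ hV₀ hV₁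
end

section
/- Let (x₀,x₁,x₂,x₃) lie on E_c. Then (x₀⁴+x₁⁴)·(x₀x₁+x₂x₃) = c·x₀²x₁²·(x₀x₃+x₁x₂). (Since π₁([2]Q) = (x₀x₃+x₁x₂ : x₀x₁+x₂x₃), this identity expresses the Kummer duplication formula, i.e. the first projection of the Montgomery endomorphism: if (u₀:u₁) = (x₀:x₁) is the Kummer image of Q, then the Kummer image of 2Q is (u₀⁴+u₁⁴ : c·u₀²u₁²), where c is the parameter of the Z/4Z-normal form.) -/
/-!
On `E_c` the two quadrics give `x₀x₂ = x₁x₃ =: p` and `s² = c·p` for `s = x₀ + x₁ + x₂ + x₃`.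
Then `x₀x₁(x₀x₃ + x₁x₂) = (x₀² + x₁²)·p`, so `c` can be traded for `s²`, which in characteristic 2
is `x₀² + x₁² + x₂² + x₃²`. What remains differs from the left-hand side by
`(x₀² + x₁²)(x₀x₂ + x₁x₃)(x₀x₃ + x₁x₂)`, and `x₀x₂ + x₁x₃ = 2p = 0`.
-/

theorem kummer_duplication_of_charTwo {R : Type*} [CommRing R] [CharP R 2] {c x₀ x₁ x₂ x₃ : R}
    (hp : x₀ * x₂ = x₁ * x₃) (hs : (x₀ + x₁ + x₂ + x₃) ^ 2 = c * (x₀ * x₂)) :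
    (x₀ ^ 4 + x₁ ^ 4) * (x₀ * x₁ + x₂ * x₃) =
      c * (x₀ ^ 2 * x₁ ^ 2) * (x₀ * x₃ + x₁ * x₂) := by
  have hsq : (x₀ + x₁ + x₂ + x₃) ^ 2 = x₀ ^ 2 + x₁ ^ 2 + x₂ ^ 2 + x₃ ^ 2 := by
    simp only [CharTwo.add_sq]
  have hcross : x₀ * x₂ + x₁ * x₃ = 0 := by
    rw [hp]
    exact CharTwo.add_self_eq_zero _
  have hkey : x₀ * x₁ * (x₀ * x₃ + x₁ * x₂) = (x₀ ^ 2 + x₁ ^ 2) * (x₀ * x₂) := by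
    linear_combination (-x₀ ^ 2) * hp
  symm
  calc c * (x₀ ^ 2 * x₁ ^ 2) * (x₀ * x₃ + x₁ * x₂)
      = x₀ * x₁ * (x₀ ^ 2 + x₁ ^ 2) * (c * (x₀ * x₂)) := by
        linear_combination c * x₀ * x₁ * hkey
    _ = x₀ * x₁ * (x₀ ^ 2 + x₁ ^ 2) * (x₀ ^ 2 + x₁ ^ 2 + x₂ ^ 2 + x₃ ^ 2) := by
        rw [← hs, hsq]
    _ = (x₀ ^ 2 + x₁ ^ 2) ^ 2 * (x₀ * x₁ - x₂ * x₃)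
          + (x₀ ^ 2 + x₁ ^ 2) * (x₀ * x₂ + x₁ * x₃) * (x₀ * x₃ + x₁ * x₂) := by
        ring
    _ = (x₀ ^ 4 + x₁ ^ 4) * (x₀ * x₁ + x₂ * x₃) := by
        rw [hcross, mul_zero, zero_mul, add_zero, CharTwo.add_sq, CharTwo.sub_eq_add]
        ring

theorem stmt_19 {k : Type*} [Field k] [CharP k 2] (c : k) (hc : c ≠ 0)
    (x₀ x₁ x₂ x₃ : k)
    (h1 : (x₀ + x₁ + x₂ + x₃) ^ 2 = c * (x₀ * x₂))
    (h2 : (x₀ + x₁ + x₂ + x₃) ^ 2 = c * (x₁ * x₃)) :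
    (x₀ ^ 4 + x₁ ^ 4) * (x₀ * x₁ + x₂ * x₃) =
      c * (x₀ ^ 2 * x₁ ^ 2) * (x₀ * x₃ + x₁ * x₂) := by
  have hp : x₀ * x₂ = x₁ * x₃ := mul_left_cancel₀ hc (h1.symm.trans h2)
  exact kummer_duplication_of_charTwo hp h1
end
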